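/- Let X and Y be bounded operators on a complex Hilbert space H and q ∈ ℂ with |q| ≤ 1. Then the q-numerical radius of the 2×2 operator matrix [[X, Y],[Y, X]] on H ⊕ H satisfies max{w_q(X−Y), w_q(X+Y)} ≤ w_q([[X,Y],[Y,X]]) ≤ max{‖X−Y‖, ‖X+Y‖}. -/

import Mathlib

noncomputable def qNumRadius {H : Type*} [NormedAddCommGroup H] [InnerProductSpace ℂ H]
    (q : ℂ) (T : H →L[ℂ] H) : ℝ :=
  sSup {r : ℝ | ∃ x y : H, ‖x‖ = 1 ∧ ‖y‖ = 1 ∧ (inner ℂ y x : ℂ) = q ∧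
    r = ‖(inner ℂ y (T x) : ℂ)‖}

/-- The `2 × 2` block operator matrix `[[Z, X],[Y, W]]` acting on `H ⊕ H`
(the `ℓ²` direct sum `WithLp 2 (H × H)`). -/
noncomputable def block2 {H : Type*} [NormedAddCommGroup H] [InnerProductSpace ℂ H]
    (Z X Y W : H →L[ℂ] H) : WithLp 2 (H × H) →L[ℂ] WithLp 2 (H × H) :=
  (((WithLp.prodContinuousLinearEquiv 2 ℂ H H).symm : (H × H) →L[ℂ] WithLp 2 (H × H)).comp
    ((Z.comp (ContinuousLinearMap.fst ℂ H H) + X.comp (ContinuousLinearMap.snd ℂ H H)).prod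
      (Y.comp (ContinuousLinearMap.fst ℂ H H) + W.comp (ContinuousLinearMap.snd ℂ H H)))).comp
    ((WithLp.prodContinuousLinearEquiv 2 ℂ H H : WithLp 2 (H × H) →L[ℂ] (H × H)))

/-!
The Hadamard unitary `(a, b) ↦ ((a + b) / √2, (a - b) / √2)` of `H ⊕ H` conjugates
`[[X, Y], [Y, X]]` into `diag(X + Y, X - Y)`, and `w_q` is invariant under unitary conjugation.
For an isometry `V` intertwining `S` with `T`, every pair of unit vectors with `⟪y, x⟫ = q` is
carried by `V` to such a pair, so `w_q(S) ≤ w_q(T)`; applied to the two coordinate embeddings of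
`H` this gives the lower bound. The upper bound is `w_q(T) ≤ ‖T‖` together with
`‖diag(S, T)‖ ≤ max ‖S‖ ‖T‖`.
-/

section QNumRadius

variable {E F : Type*} [NormedAddCommGroup E] [InnerProductSpace ℂ E]
  [NormedAddCommGroup F] [InnerProductSpace ℂ F]

lemma qNumRadius_nonneg (q : ℂ) (T : E →L[ℂ] E) : 0 ≤ qNumRadius q T :=
  Real.sSup_nonneg <| by rintro r ⟨x, y, -, -, -, rfl⟩; positivity

lemma qNumRadius_le_of_forall {q : ℂ} {T : E →L[ℂ] E} {c : ℝ} (hc : 0 ≤ c)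
    (h : ∀ x y : E, ‖x‖ = 1 → ‖y‖ = 1 → inner ℂ y x = q → ‖inner ℂ y (T x)‖ ≤ c) :
    qNumRadius q T ≤ c :=
  Real.sSup_le (by rintro r ⟨x, y, hx, hy, hxy, rfl⟩; exact h x y hx hy hxy) hc

lemma norm_inner_apply_le_opNorm (T : E →L[ℂ] E) {x y : E} (hx : ‖x‖ = 1) (hy : ‖y‖ = 1) :
    ‖inner ℂ y (T x)‖ ≤ ‖T‖ :=
  calc ‖inner ℂ y (T x)‖ ≤ ‖y‖ * ‖T x‖ := norm_inner_le_norm _ _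
    _ ≤ ‖T‖ := by simpa [hx, hy] using T.le_opNorm x

lemma qNumRadius_le_opNorm (q : ℂ) (T : E →L[ℂ] E) : qNumRadius q T ≤ ‖T‖ :=
  qNumRadius_le_of_forall (norm_nonneg T) fun _ _ hx hy _ ↦ norm_inner_apply_le_opNorm T hx hy

lemma norm_inner_apply_le_qNumRadius (T : E →L[ℂ] E) {q : ℂ} {x y : E} (hx : ‖x‖ = 1)
    (hy : ‖y‖ = 1) (hxy : inner ℂ y x = q) : ‖inner ℂ y (T x)‖ ≤ qNumRadius q T := by
  refine le_csSup ⟨‖T‖, ?_⟩ ⟨x, y, hx, hy, hxy, rfl⟩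
  rintro r ⟨x, y, hx, hy, -, rfl⟩
  exact norm_inner_apply_le_opNorm T hx hy

lemma qNumRadius_le_of_isometry_intertwines (q : ℂ) (V : E →ₗᵢ[ℂ] F) {S : E →L[ℂ] E}
    {T : F →L[ℂ] F} (h : ∀ x, T (V x) = V (S x)) : qNumRadius q S ≤ qNumRadius q T := by
  refine qNumRadius_le_of_forall (qNumRadius_nonneg q T) fun x y hx hy hxy ↦ ?_
  have hVxy : inner ℂ (V y) (V x) = q := by rw [V.inner_map_map, hxy]
  calc ‖inner ℂ y (S x)‖ = ‖inner ℂ (V y) (T (V x))‖ := by rw [h, V.inner_map_map]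
    _ ≤ qNumRadius q T := norm_inner_apply_le_qNumRadius T (by simpa) (by simpa) hVxy

lemma qNumRadius_eq_of_unitary_intertwines (q : ℂ) (U : E ≃ₗᵢ[ℂ] F) {S : E →L[ℂ] E}
    {T : F →L[ℂ] F} (h : ∀ x, T (U x) = U (S x)) : qNumRadius q S = qNumRadius q T := by
  refine le_antisymm (qNumRadius_le_of_isometry_intertwines q U.toLinearIsometry h)
    (qNumRadius_le_of_isometry_intertwines q U.symm.toLinearIsometry fun x ↦ ?_)
  simpa using congr_arg U.symm (h (U.symm x)).symm

end QNumRadius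

section Block

variable {H : Type*} [NormedAddCommGroup H] [InnerProductSpace ℂ H]

lemma block2_fst (Z X Y W : H →L[ℂ] H) (v : WithLp 2 (H × H)) :
    (block2 Z X Y W v).fst = Z v.fst + X v.snd := rfl

lemma block2_snd (Z X Y W : H →L[ℂ] H) (v : WithLp 2 (H × H)) :
    (block2 Z X Y W v).snd = Y v.fst + W v.snd := rfl

lemma norm_block2_diag_le (S T : H →L[ℂ] H) : ‖block2 S 0 0 T‖ ≤ max ‖S‖ ‖T‖ := by
  set M := max ‖S‖ ‖T‖
  refine (block2 S 0 0 T).opNorm_le_bound (by positivity) fun v ↦ ?_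
  refine le_of_pow_le_pow_left₀ two_ne_zero (by positivity) ?_
  have hS : ‖S v.fst‖ ≤ M * ‖v.fst‖ := (S.le_opNorm _).trans (by gcongr; exact le_max_left _ _)
  have hT : ‖T v.snd‖ ≤ M * ‖v.snd‖ := (T.le_opNorm _).trans (by gcongr; exact le_max_right _ _)
  rw [mul_pow, WithLp.prod_norm_sq_eq_of_L2, WithLp.prod_norm_sq_eq_of_L2, block2_fst, block2_snd]
  simp only [zero_apply, add_zero, zero_add]
  nlinarith [norm_nonneg (S v.fst), norm_nonneg (T v.snd)]

noncomputable def hadamard : WithLp 2 (H × H) →L[ℂ] WithLp 2 (H × H) :=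
  ((√2 : ℂ))⁻¹ • block2 1 1 1 (-1)

lemma hadamard_fst (v : WithLp 2 (H × H)) :
    (hadamard v).fst = ((√2 : ℂ))⁻¹ • (v.fst + v.snd) := rfl

lemma hadamard_snd (v : WithLp 2 (H × H)) :
    (hadamard v).snd = ((√2 : ℂ))⁻¹ • (v.fst - v.snd) := by
  simp [hadamard, block2_snd, sub_eq_add_neg]

lemma hadamard_hadamard (v : WithLp 2 (H × H)) : hadamard (hadamard v) = v := by
  have hc : ((√2 : ℂ))⁻¹ * ((√2 : ℂ))⁻¹ = 1 / 2 := by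
    rw [← mul_inv, ← Complex.ofReal_mul, Real.mul_self_sqrt zero_le_two]; norm_num
  rw [WithLp.ext_iff, Prod.ext_iff]
  simp only [WithLp.ofLp_fst, WithLp.ofLp_snd, hadamard_fst, hadamard_snd, ← smul_add, ← smul_sub,
    smul_smul, hc]
  constructor <;> module

lemma norm_hadamard (v : WithLp 2 (H × H)) : ‖hadamard v‖ = ‖v‖ := by
  have hc : ‖((√2 : ℂ))⁻¹‖ ^ 2 = 1 / 2 := by
    rw [norm_inv, Complex.norm_real, Real.norm_of_nonneg (Real.sqrt_nonneg 2), inv_pow,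
      Real.sq_sqrt zero_le_two, one_div]
  refine (pow_left_inj₀ (norm_nonneg _) (norm_nonneg _) two_ne_zero).1 ?_
  rw [WithLp.prod_norm_sq_eq_of_L2, WithLp.prod_norm_sq_eq_of_L2, hadamard_fst, hadamard_snd,
    norm_smul, norm_smul, mul_pow, mul_pow, ← mul_add, parallelogram_law_with_norm ℂ, hc]
  ring

noncomputable def hadamardₗᵢ : WithLp 2 (H × H) ≃ₗᵢ[ℂ] WithLp 2 (H × H) :=
  LinearIsometryEquiv.ofSurjective ⟨(hadamard (H := H)).toLinearMap, norm_hadamard⟩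
    fun v ↦ ⟨hadamard v, hadamard_hadamard v⟩

lemma block2_diag_hadamard (X Y : H →L[ℂ] H) (v : WithLp 2 (H × H)) :
    block2 (X + Y) 0 0 (X - Y) (hadamard v) = hadamard (block2 X Y Y X v) := by
  rw [WithLp.ext_iff, Prod.ext_iff]
  simp only [WithLp.ofLp_fst, WithLp.ofLp_snd, block2_fst, block2_snd, hadamard_fst, hadamard_snd,
    add_apply, sub_apply, zero_apply, map_add, map_sub, map_smul]
  constructor <;> module

lemma qNumRadius_block2_eq_diag (q : ℂ) (X Y : H →L[ℂ] H) :
    qNumRadius q (block2 X Y Y X) = qNumRadius q (block2 (X + Y) 0 0 (X - Y)) :=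
  qNumRadius_eq_of_unitary_intertwines q (hadamardₗᵢ (H := H)) (block2_diag_hadamard X Y)

lemma qNumRadius_le_qNumRadius_block2_diag_left (q : ℂ) (S T : H →L[ℂ] H) :
    qNumRadius q S ≤ qNumRadius q (block2 S 0 0 T) :=
  qNumRadius_le_of_isometry_intertwines q
    { toFun a := WithLp.toLp 2 (a, 0)
      map_add' a b := by simp [← WithLp.toLp_add]
      map_smul' c a := by simp [← WithLp.toLp_smul]
      norm_map' := WithLp.norm_toLp_fst 2 H H }
    fun a ↦ by
      rw [WithLp.ext_iff, Prod.ext_iff]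
      simp [block2_fst, block2_snd]

lemma qNumRadius_le_qNumRadius_block2_diag_right (q : ℂ) (S T : H →L[ℂ] H) :
    qNumRadius q T ≤ qNumRadius q (block2 S 0 0 T) :=
  qNumRadius_le_of_isometry_intertwines q
    { toFun b := WithLp.toLp 2 (0, b)
      map_add' a b := by simp [← WithLp.toLp_add]
      map_smul' c a := by simp [← WithLp.toLp_smul]
      norm_map' := WithLp.norm_toLp_snd 2 H H }
    fun a ↦ by
      rw [WithLp.ext_iff, Prod.ext_iff]
      simp [block2_fst, block2_snd]

end Block

theorem stmt11_general {H : Type*} [NormedAddCommGroup H] [InnerProductSpace ℂ H]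
    (X Y : H →L[ℂ] H) (q : ℂ) :
    max (qNumRadius q (X - Y)) (qNumRadius q (X + Y)) ≤ qNumRadius q (block2 X Y Y X) ∧
      qNumRadius q (block2 X Y Y X) ≤ max ‖X - Y‖ ‖X + Y‖ := by
  rw [qNumRadius_block2_eq_diag, max_comm, max_comm ‖X - Y‖]
  exact ⟨max_le (qNumRadius_le_qNumRadius_block2_diag_left q _ _)
      (qNumRadius_le_qNumRadius_block2_diag_right q _ _),
    (qNumRadius_le_opNorm q _).trans (norm_block2_diag_le _ _)⟩

theorem stmt11 {H : Type*} [NormedAddCommGroup H] [InnerProductSpace ℂ H]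
    (X Y : H →L[ℂ] H) (q : ℂ) (hq : ‖q‖ ≤ 1) :
    max (qNumRadius q (X - Y)) (qNumRadius q (X + Y)) ≤ qNumRadius q (block2 X Y Y X) ∧
      qNumRadius q (block2 X Y Y X) ≤ max ‖X - Y‖ ‖X + Y‖ :=
  stmt11_general X Y q
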